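/- If κ : [0,∞) → [0,1) is a class K¹ function differentiable on (0,∞) with κ' > 0 there, 0 ≤ p < 1, Tc > 0, and y : [0,∞) → [0,∞) is an absolutely continuous function satisfying the differential inequality y'(t) ≤ -(1/((1-p)·Tc)) · κ(y(t))^p / κ'(y(t)) for almost every t with y(t) > 0, then y(t) = 0 for all t ≥ Tc·κ(y(0))^{1-p}; in particular, y(t) = 0 for all t ≥ Tc. -/

import Mathlib

open MeasureTheory

def IsClassK1 (kappa : ℝ → ℝ) : Prop :=
  ContinuousOn kappa (Set.Ici 0) ∧ StrictMonoOn kappa (Set.Ici 0) ∧ kappa 0 = 0 ∧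
    Filter.Tendsto kappa Filter.atTop (nhds 1) ∧
    ∀ r ∈ Set.Ici (0 : ℝ), kappa r ∈ Set.Ico (0 : ℝ) 1

open Set

/-! Along the solution, `V = κ (y t) ^ (1 - p)` has derivative
`(1 - p) κ(y)^(-p) κ'(y) y' ≤ -1 / Tc` almost everywhere where `y > 0`, so `V`, which is
nonnegative, decreases at rate at least `1 / Tc` while `y` stays positive; hence `y` must vanish
by time `Tc * V 0 ≤ Tc`. Once `y` vanishes it stays zero, because the inequality forces `y` to be
nonincreasing on every interval where it is positive, and `y` is continuous. -/

theorem AntitoneOn.sub_le_mul_of_ae_deriv_le {f : ℝ → ℝ} {a b c : ℝ} (hab : a ≤ b)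
    (hf : AntitoneOn f (Icc a b)) (hf' : ∀ᵐ x, x ∈ Ioo a b → deriv f x ≤ c) :
    f b - f a ≤ c * (b - a) := by
  have hmono : MonotoneOn (-f) (uIcc a b) := uIcc_of_le hab ▸ hf.neg
  have hlower : ∫ _ in a..b, -c ≤ ∫ x in a..b, deriv (-f) x := by
    refine intervalIntegral.integral_mono_ae_restrict hab intervalIntegrable_const
      hmono.intervalIntegrable_deriv ?_
    rw [← restrict_Ioo_eq_restrict_Icc]
    filter_upwards [(ae_restrict_iff' measurableSet_Ioo).2 hf'] with x hx
    simpa [deriv.neg] using hx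
  have hfab : f b ≤ f a := hf (left_mem_Icc.2 hab) (right_mem_Icc.2 hab) hab
  have hupper := mem_uIcc.1 hmono.intervalIntegral_deriv_mem_uIcc
  simp only [intervalIntegral.integral_const, smul_eq_mul, Pi.neg_apply] at hlower hupper
  rcases hupper with h | h <;> linarith

theorem ae_hasDerivAt_of_eq_add_integral {E : Type*} [NormedAddCommGroup E] [NormedSpace ℝ E]
    [CompleteSpace E] {f f' : ℝ → E} {a b : ℝ} (hf' : IntervalIntegrable f' volume a b)
    (hf : ∀ x ∈ Ioo a b, f x = f a + ∫ t in a..x, f' t) :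
    ∀ᵐ x, x ∈ Ioo a b → HasDerivAt f (f' x) x := by
  filter_upwards [hf'.ae_hasDerivAt_integral] with x hx hxab
  have hxab' : x ∈ uIcc a b := Ioo_subset_Icc_self.trans Icc_subset_uIcc hxab
  refine ((hx hxab' a left_mem_uIcc).const_add (f a)).congr_of_eventuallyEq ?_
  filter_upwards [isOpen_Ioo.mem_nhds hxab] with u hu using hf u hu

theorem ContinuousOn.forall_pos_of_right_pos {y : ℝ → ℝ} {a b : ℝ}
    (hy : ContinuousOn y (Icc a b)) (hy_nonneg : ∀ t ∈ Icc a b, 0 ≤ y t)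
    (hy_decr : ∀ s ∈ Icc a b, (∀ u ∈ Ioc s b, 0 < y u) → y b ≤ y s) (hb : 0 < y b) :
    ∀ t ∈ Icc a b, 0 < y t := by
  by_contra! hzero
  obtain ⟨t, ht, hyt⟩ := hzero
  obtain ⟨s, ⟨hs, hys⟩, hs_max⟩ : ∃ s, IsGreatest (Icc a b ∩ y ⁻¹' {0}) s :=
    (isCompact_Icc.of_isClosed_subset
      (hy.preimage_isClosed_of_isClosed isClosed_Icc isClosed_singleton) inter_subset_left)
      |>.exists_isGreatest ⟨t, ht, hyt.antisymm (hy_nonneg t ht)⟩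
  have hpos : ∀ u ∈ Ioc s b, 0 < y u := fun u hu =>
    (hy_nonneg u ⟨hs.1.trans hu.1.le, hu.2⟩).lt_of_ne fun h =>
      hu.1.not_ge (hs_max ⟨⟨hs.1.trans hu.1.le, hu.2⟩, h.symm⟩)
  exact hb.not_ge ((hy_decr s hs hpos).trans_eq hys)

namespace IsClassK1

variable {κ : ℝ → ℝ}

theorem pos (hκ : IsClassK1 κ) {r : ℝ} (hr : 0 < r) : 0 < κ r :=
  hκ.2.2.1 ▸ hκ.2.1 self_mem_Ici hr.le hr

theorem monotoneOn (hκ : IsClassK1 κ) : MonotoneOn κ (Ici 0) :=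
  hκ.2.1.monotoneOn

theorem rpow_nonneg (hκ : IsClassK1 κ) {r : ℝ} (hr : 0 ≤ r) (q : ℝ) : 0 ≤ κ r ^ q :=
  Real.rpow_nonneg (hκ.2.2.2.2 r hr).1 q

theorem rpow_le_one (hκ : IsClassK1 κ) {r q : ℝ} (hr : 0 ≤ r) (hq : 0 ≤ q) :
    κ r ^ q ≤ 1 :=
  Real.rpow_le_one (hκ.2.2.2.2 r hr).1 (hκ.2.2.2.2 r hr).2.le hq

end IsClassK1

theorem deriv_rpow_comp_le {κ y : ℝ → ℝ} {k v p Tc t : ℝ} (hp1 : p < 1) (hTc : 0 < Tc)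
    (hy : HasDerivAt y v t) (hκ : HasDerivAt κ k (y t)) (hk : 0 < k) (hκy : 0 < κ (y t))
    (hv : v ≤ -(1 / ((1 - p) * Tc)) * (κ (y t) ^ p / k)) :
    deriv (fun s => κ (y s) ^ (1 - p)) t ≤ -(1 / Tc) := by
  set K := κ (y t)
  have h1p : 0 < 1 - p := sub_pos.2 hp1
  have hcomp : HasDerivAt (fun s => κ (y s)) (k * v) t := hκ.comp t hy
  rw [(hcomp.rpow_const (p := 1 - p) (Or.inl hκy.ne')).deriv]
  calc k * v * (1 - p) * K ^ (1 - p - 1) = k * (1 - p) * K ^ (1 - p - 1) * v := by ring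
    _ ≤ k * (1 - p) * K ^ (1 - p - 1) * (-(1 / ((1 - p) * Tc)) * (K ^ p / k)) := by gcongr
    _ = -(1 / Tc) := by
      rw [sub_sub_cancel_left, Real.rpow_neg hκy.le]
      field_simp

theorem le_of_forall_pos_of_ae_le {κ κ' y y' : ℝ → ℝ} {p Tc a b : ℝ} (hκ : IsClassK1 κ)
    (hκ' : ∀ r > 0, 0 < κ' r) (hp1 : p < 1) (hTc : 0 < Tc) (hab : a ≤ b)
    (hy_ac : y b - y a = ∫ t in a..b, y' t) (hy_pos : ∀ t ∈ Ioc a b, 0 < y t)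
    (hy_ineq : ∀ᵐ t, t ∈ Ioc a b →
      y' t ≤ -(1 / ((1 - p) * Tc)) * (κ (y t) ^ p / κ' (y t))) :
    y b ≤ y a := by
  have hint : ∫ t in a..b, y' t ≤ 0 := by
    rw [intervalIntegral.integral_of_le hab]
    refine integral_nonpos_of_ae ?_
    filter_upwards [ae_restrict_mem measurableSet_Ioc, ae_restrict_of_ae hy_ineq] with t ht hineq
    have hyt := hy_pos t ht
    have hrate : 0 ≤ 1 / ((1 - p) * Tc) * (κ (y t) ^ p / κ' (y t)) :=
      mul_nonneg (one_div_nonneg.2 (mul_pos (sub_pos.2 hp1) hTc).le)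
        (div_nonneg (hκ.rpow_nonneg hyt.le p) (hκ' _ hyt).le)
    rw [Pi.zero_apply]
    linarith [hineq ht]
  linarith

theorem rpow_comp_le_sub_of_ae_le {κ κ' y y' : ℝ → ℝ} {p Tc a b : ℝ} (hκ : IsClassK1 κ)
    (hκ' : ∀ r > 0, HasDerivAt κ (κ' r) r ∧ 0 < κ' r) (hp1 : p < 1) (hTc : 0 < Tc)
    (hab : a ≤ b) (hy_pos : ∀ t ∈ Icc a b, 0 < y t) (hy_anti : AntitoneOn y (Icc a b))
    (hy' : ∀ᵐ t, t ∈ Ioo a b → HasDerivAt y (y' t) t)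
    (hy_ineq : ∀ᵐ t, t ∈ Ioo a b →
      y' t ≤ -(1 / ((1 - p) * Tc)) * (κ (y t) ^ p / κ' (y t))) :
    κ (y b) ^ (1 - p) ≤ κ (y a) ^ (1 - p) - (b - a) / Tc := by
  have hV_anti : AntitoneOn (fun t => κ (y t) ^ (1 - p)) (Icc a b) := fun u hu v hv huv =>
    Real.rpow_le_rpow (hκ.pos (hy_pos v hv)).le
      (hκ.monotoneOn (hy_pos v hv).le (hy_pos u hu).le (hy_anti hu hv huv)) (sub_pos.2 hp1).le
  have hV' : ∀ᵐ t, t ∈ Ioo a b → deriv (fun t => κ (y t) ^ (1 - p)) t ≤ -(1 / Tc) := by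
    filter_upwards [hy', hy_ineq] with t hyt hineq ht
    have hyt_pos := hy_pos t (Ioo_subset_Icc_self ht)
    exact deriv_rpow_comp_le hp1 hTc (hyt ht) (hκ' _ hyt_pos).1 (hκ' _ hyt_pos).2
      (hκ.pos hyt_pos) (hineq ht)
  have := hV_anti.sub_le_mul_of_ae_deriv_le hab hV'
  linarith [show -(1 / Tc) * (b - a) = -((b - a) / Tc) by ring]

theorem comparison_ineq_settling_general (κ κ' : ℝ → ℝ) (hκ : IsClassK1 κ)
    (hκ' : ∀ r > (0:ℝ), HasDerivAt κ (κ' r) r ∧ 0 < κ' r)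
    (p Tc : ℝ) (hp1 : p < 1) (hTc : 0 < Tc)
    (y y' : ℝ → ℝ) (hy_nonneg : ∀ t ≥ (0:ℝ), 0 ≤ y t)
    (hy_cont : ContinuousOn y (Set.Ici 0))
    (hy_int : ∀ a b : ℝ, 0 ≤ a → a ≤ b → IntervalIntegrable y' volume a b)
    (hy_ac : ∀ a b : ℝ, 0 ≤ a → a ≤ b → y b - y a = ∫ t in a..b, y' t)
    (hy_ineq : ∀ᵐ t ∂(volume.restrict (Set.Ici (0:ℝ))), 0 < y t →
      y' t ≤ -(1 / ((1 - p) * Tc)) * (κ (y t) ^ p / κ' (y t))) :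
    (∀ t ≥ Tc * κ (y 0) ^ (1 - p), y t = 0) ∧ (∀ t ≥ Tc, y t = 0) := by
  have hy_ineq₀ := (ae_restrict_iff' measurableSet_Ici).1 hy_ineq
  have hy_decr : ∀ a b, 0 ≤ a → a ≤ b → (∀ s ∈ Ioc a b, 0 < y s) → y b ≤ y a :=
    fun a b ha hab hpos => le_of_forall_pos_of_ae_le hκ (fun r hr => (hκ' r hr).2) hp1 hTc hab
      (hy_ac a b ha hab) hpos
      (by filter_upwards [hy_ineq₀] with t ht hts using ht (ha.trans hts.1.le) (hpos t hts))
  have hsettle : ∀ t ≥ Tc * κ (y 0) ^ (1 - p), y t = 0 := by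
    intro t ht
    have ht0 : 0 ≤ t := ht.trans' (mul_nonneg hTc.le (hκ.rpow_nonneg (hy_nonneg 0 le_rfl) _))
    by_contra hyt
    have hpos : ∀ s ∈ Icc 0 t, 0 < y s :=
      (hy_cont.mono Icc_subset_Ici_self).forall_pos_of_right_pos
        (fun s hs => hy_nonneg s hs.1) (fun s hs hpos => hy_decr s t hs.1 hs.2 hpos)
        ((hy_nonneg t ht0).lt_of_ne' hyt)
    have hanti : AntitoneOn y (Icc 0 t) := fun u hu v hv huv =>
      hy_decr u v hu.1 huv fun s hs => hpos s ⟨hu.1.trans hs.1.le, hs.2.trans hv.2⟩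
    have hdecay := rpow_comp_le_sub_of_ae_le hκ hκ' hp1 hTc ht0 hpos hanti
      (ae_hasDerivAt_of_eq_add_integral (hy_int 0 t le_rfl ht0)
        fun s hs => sub_eq_iff_eq_add'.1 (hy_ac 0 s le_rfl hs.1.le))
      (by filter_upwards [hy_ineq₀] with s hs hst
            using hs hst.1.le (hpos s ⟨hst.1.le, hst.2.le⟩))
    have hκt : 0 < κ (y t) ^ (1 - p) :=
      Real.rpow_pos_of_pos (hκ.pos (hpos t (right_mem_Icc.2 ht0))) _
    have hκ0 : κ (y 0) ^ (1 - p) ≤ t / Tc := (le_div_iff₀' hTc).2 ht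
    rw [sub_zero] at hdecay
    linarith
  exact ⟨hsettle, fun t ht => hsettle t (ht.trans' (mul_le_of_le_one_right hTc.le
    (hκ.rpow_le_one (hy_nonneg 0 le_rfl) (sub_pos.2 hp1).le)))⟩

theorem comparison_ineq_settling (κ κ' : ℝ → ℝ) (hκ : IsClassK1 κ)
    (hκ' : ∀ r > (0:ℝ), HasDerivAt κ (κ' r) r ∧ 0 < κ' r)
    (p Tc : ℝ) (hp : 0 ≤ p) (hp1 : p < 1) (hTc : 0 < Tc)
    (y y' : ℝ → ℝ) (hy_nonneg : ∀ t ≥ (0:ℝ), 0 ≤ y t)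
    (hy_cont : ContinuousOn y (Set.Ici 0))
    (hy_int : ∀ a b : ℝ, 0 ≤ a → a ≤ b → IntervalIntegrable y' volume a b)
    (hy_ac : ∀ a b : ℝ, 0 ≤ a → a ≤ b → y b - y a = ∫ t in a..b, y' t)
    (hy_ineq : ∀ᵐ t ∂(volume.restrict (Set.Ici (0:ℝ))), 0 < y t →
      y' t ≤ -(1 / ((1 - p) * Tc)) * (κ (y t) ^ p / κ' (y t))) :
    (∀ t ≥ Tc * κ (y 0) ^ (1 - p), y t = 0) ∧ (∀ t ≥ Tc, y t = 0) :=
  comparison_ineq_settling_general κ κ' hκ hκ' p Tc hp1 hTc y y' hy_nonneg hy_cont hy_int hy_ac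
    hy_ineq
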